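/- Let G be a simple connected graph with n ≥ 2 vertices and m edges, and write a_k = d(G,k). Then the Wiener index of the Mycielskian of G is W(μ(G)) = 6n² − n − 7m − 4a_2 − a_3. -/

import Mathlib

open SimpleGraph Polynomial Finset

/-- The Mycielskian `μ(G)` of a simple graph `G`. Vertices `Sum.inl v` are the original
vertices `v_i`, vertices `Sum.inr (Sum.inl v)` are the shadow vertices `u_i`, and
`Sum.inr (Sum.inr ())` is the apex vertex `w`.  Edges: the edges of `G`, the edges `w u_i`,
and the edges `u_i v_j`, `u_j v_i` for every edge `v_i v_j` of `G`. -/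
def mycielskian {V : Type*} (G : SimpleGraph V) : SimpleGraph (V ⊕ V ⊕ Unit) :=
  SimpleGraph.fromRel (fun a b =>
    match a, b with
    | Sum.inl a, Sum.inl b => G.Adj a b
    | Sum.inl a, Sum.inr (Sum.inl b) => G.Adj a b
    | Sum.inr (Sum.inl _), Sum.inr (Sum.inr _) => True
    | _, _ => False)

/-- `distCount G k` is `d(G,k)`, the number of unordered pairs of distinct vertices of `G`
whose graph distance is exactly `k`. -/
noncomputable def distCount {V : Type*} (G : SimpleGraph V) (k : ℕ) : ℕ :=
  Nat.card {e : Sym2 V // ¬ e.IsDiag ∧ Sym2.lift ⟨G.dist, fun _ _ => G.dist_comm⟩ e = k}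

/-- The Hosoya polynomial `H(G,x) = Σ_{k=1}^{D(G)} d(G,k) x^k` (with rational coefficients). -/
noncomputable def hosoya {V : Type*} (G : SimpleGraph V) : Polynomial ℚ :=
  ∑ k ∈ Finset.Icc 1 G.diam, (distCount G k : ℚ) • Polynomial.X ^ k

/-- The Wiener index `W(G)`: the sum of distances over all unordered pairs of distinct
vertices (the diagonal contributes `0`, so we may sum over ordered pairs and halve). -/
noncomputable def wiener {V : Type*} (G : SimpleGraph V) [Fintype V] : ℚ :=
  (∑ u : V, ∑ v : V, (G.dist u v : ℚ)) / 2

/-- The Hyper-Wiener index `WW(G) = (1/2) Σ_{{u,v}} (d(u,v)² + d(u,v))`. -/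
noncomputable def hyperWiener {V : Type*} (G : SimpleGraph V) [Fintype V] : ℚ :=
  (∑ u : V, ∑ v : V, ((G.dist u v : ℚ) ^ 2 + (G.dist u v : ℚ))) / 4

/-- The TSZ index `TSZ(G) = (1/6) Σ_{{u,v}} d³ + (1/2) Σ_{{u,v}} d² + (1/3) Σ_{{u,v}} d`. -/
noncomputable def tszIndex {V : Type*} (G : SimpleGraph V) [Fintype V] : ℚ :=
  (∑ u : V, ∑ v : V, (G.dist u v : ℚ) ^ 3) / 12
    + (∑ u : V, ∑ v : V, (G.dist u v : ℚ) ^ 2) / 4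
    + (∑ u : V, ∑ v : V, (G.dist u v : ℚ)) / 6

/-- The Harary index `Har(G) = Σ_{{u,v}} 1/d(u,v)` (diagonal terms are `0⁻¹ = 0`). -/
noncomputable def harary {V : Type*} (G : SimpleGraph V) [Fintype V] : ℚ :=
  (∑ u : V, ∑ v : V, ((G.dist u v : ℚ))⁻¹) / 2

/-- The closeness `C(G) = Σ_u Σ_{v ≠ u} 2^{-d(u,v)}` over ordered pairs of distinct vertices. -/
noncomputable def closeness {V : Type*} (G : SimpleGraph V) [Fintype V] : ℚ :=
  letI := Classical.decEq V
  ∑ u : V, ∑ v : V, if v = u then 0 else ((1 : ℚ) / 2) ^ (G.dist u v)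

/-- `σ_{uv}`: the number of shortest paths (walks of length `dist u v`) from `u` to `v`. -/
noncomputable def numSP {V : Type*} (G : SimpleGraph V) (u v : V) : ℕ :=
  Nat.card {p : G.Walk u v // p.length = G.dist u v}

/-- `σ_{uv}(w)`: the number of shortest paths from `u` to `v` passing through `w`. -/
noncomputable def numSPthrough {V : Type*} (G : SimpleGraph V) (w u v : V) : ℕ :=
  Nat.card {p : G.Walk u v // p.length = G.dist u v ∧ w ∈ p.support}

/-- The betweenness centrality `B_w = Σ_{{u,v}, u ≠ w ≠ v} σ_{uv}(w)/σ_{uv}` of a vertex `w`,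
summed over unordered pairs of distinct vertices (ordered pairs, halved). -/
noncomputable def btwVertex {V : Type*} (G : SimpleGraph V) [Fintype V] (w : V) : ℚ :=
  letI := Classical.decEq V
  (∑ u : V, ∑ v : V,
    if u ≠ v ∧ u ≠ w ∧ v ≠ w then (numSPthrough G w u v : ℚ) / (numSP G u v) else 0) / 2

/-- The betweenness centrality of a graph: `B⁻(G) = (1/N) Σ_w B_w`. -/
noncomputable def btw {V : Type*} (G : SimpleGraph V) [Fintype V] : ℚ :=
  (∑ w : V, btwVertex G w) / (Fintype.card V)

/-- The star graph `S_n`: center `0` joined to the `n` leaves `1, …, n`. -/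
def starGraph (n : ℕ) : SimpleGraph (Fin (n + 1)) :=
  SimpleGraph.fromRel (fun a _ => a = 0)

/-- The join `G₁ ⊕ G₂` of two graphs on disjoint vertex sets: all edges of `G₁`, all edges
of `G₂`, and all edges between `V(G₁)` and `V(G₂)`. -/
def joinGraph {V₁ V₂ : Type*} (G₁ : SimpleGraph V₁) (G₂ : SimpleGraph V₂) :
    SimpleGraph (V₁ ⊕ V₂) :=
  SimpleGraph.fromRel (fun a b =>
    match a, b with
    | Sum.inl a, Sum.inl b => G₁.Adj a b
    | Sum.inr a, Sum.inr b => G₂.Adj a b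
    | Sum.inl _, Sum.inr _ => True
    | _, _ => False)

/-
Folding every vertex of `μ(G)` except the apex `w` onto its vertex of `G` maps edges to edges, so a
shortest walk between two vertices other than `w` either passes through `w` or folds onto a walk
of `G` of the same length. Since `d(v_i, w) = 2` and `d(u_i, w) = 1` (no vertex of `G` is
isolated), this gives `d(v_i, v_j) = min (d_G(v_i, v_j)) 4`, `d(v_i, u_j) = min (d_G(v_i, v_j)) 3`
for `i ≠ j`, `d(v_i, u_i) = 2` and `d(u_i, u_j) = 2`. Writing `min d 4` and `min d 3` as linear
combinations of the indicators `[d = k]`, `k ≤ 3`, and counting the ordered pairs at distance `k`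
as twice the edges of the distance-`k` graph, the sum over the nine blocks of vertex pairs is
`2 (6n² - n - 7m - 4a₂ - a₃)`.
-/

namespace SimpleGraph

variable {V : Type*} {H : SimpleGraph V}

lemma dist_eq_two_of_adj_of_adj {x y z : V} (hxz : H.Adj x z) (hzy : H.Adj z y)
    (hxy : ¬ H.Adj x y) (hne : x ≠ y) : H.dist x y = 2 := by
  have : H.edist x y = 2 :=
    edist_eq_two_iff.2 ⟨hne, hxy, z, H.mem_commonNeighbors.2 ⟨hxz, hzy.symm⟩⟩
  simp [dist, this]

lemma Walk.dist_add_dist_le_length [DecidableEq V] {x y z : V} (p : H.Walk x y)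
    (hz : z ∈ p.support) : H.dist x z + H.dist z y ≤ p.length := by
  rw [← p.take_spec hz, Walk.length_append]
  exact add_le_add (dist_le _) (dist_le _)

def distGraph (G : SimpleGraph V) (k : ℕ) : SimpleGraph V where
  Adj a b := a ≠ b ∧ G.dist a b = k
  symm := ⟨fun _ _ h => ⟨h.1.symm, G.dist_comm ▸ h.2⟩⟩
  loopless := ⟨fun _ h => h.1 rfl⟩

@[simp]
lemma distGraph_adj {G : SimpleGraph V} {k : ℕ} {a b : V} :
    (G.distGraph k).Adj a b ↔ a ≠ b ∧ G.dist a b = k :=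
  Iff.rfl

lemma distGraph_one (G : SimpleGraph V) : G.distGraph 1 = G := by
  ext a b
  simp only [distGraph_adj, dist_eq_one_iff_adj]
  exact ⟨And.right, fun h => ⟨h.ne, h⟩⟩

end SimpleGraph

open SimpleGraph

section DistCount

variable {V : Type*} (G : SimpleGraph V)

lemma distCount_eq_card_edgeSet (k : ℕ) : distCount G k = Nat.card (G.distGraph k).edgeSet :=
  Nat.card_congr <| Equiv.subtypeEquivRight fun e => by
    induction e with
    | _ a b => simp [distGraph]

lemma distCount_one : distCount G 1 = Nat.card G.edgeSet := by
  rw [distCount_eq_card_edgeSet, distGraph_one]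

variable [Fintype V]

lemma sum_sum_ite_dist_eq {k : ℕ} (hk : k ≠ 0) (c : ℚ) :
    ∑ a : V, ∑ b : V, (if G.dist a b = k then c else 0) = 2 * distCount G k * c := by
  classical
  have hadj : ∀ a b, G.dist a b = k ↔ (G.distGraph k).Adj a b := fun a b =>
    ⟨fun h => distGraph_adj.2 ⟨fun hab => hk (by rw [← h, hab, dist_self]), h⟩, And.right⟩
  simp only [hadj, ← Finset.sum_filter, Finset.sum_const, ← neighborFinset_eq_filter,
    card_neighborFinset_eq_degree, nsmul_eq_mul, ← Finset.sum_mul]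
  rw [← Nat.cast_sum, sum_degrees_eq_twice_card_edges, distCount_eq_card_edgeSet,
    Nat.card_eq_fintype_card, edgeFinset_card]
  push_cast
  ring

lemma sum_sum_ite_dist_zero (hc : G.Connected) (c : ℚ) :
    ∑ a : V, ∑ b : V, (if G.dist a b = 0 then c else 0) = Fintype.card V * c := by
  classical
  simp [hc.dist_eq_zero_iff]

end DistCount

lemma cast_min_four (d : ℕ) : ((min d 4 : ℕ) : ℚ) = 4 - (if d = 0 then 4 else 0)
    - (if d = 1 then 3 else 0) - (if d = 2 then 2 else 0) - (if d = 3 then 1 else 0) := by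
  rcases d with _ | _ | _ | _ | d <;>
    norm_num [add_assoc, Nat.add_eq_one_iff, Nat.add_eq_two_iff, Nat.add_eq_three_iff]

lemma cast_ite_min_three (d : ℕ) : ((if d = 0 then 2 else min d 3 : ℕ) : ℚ) =
    3 - (if d = 0 then 1 else 0) - (if d = 1 then 2 else 0) - (if d = 2 then 1 else 0) := by
  rcases d with _ | _ | _ | d <;> norm_num [add_assoc, Nat.add_eq_one_iff, Nat.add_eq_two_iff]

section Mycielskian

variable {V : Type*} {G : SimpleGraph V}

local notation "μ" => mycielskian G
local notation "apex" => (Sum.inr (Sum.inr ()) : V ⊕ V ⊕ Unit)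
local notation "shadow" a => (Sum.inr (Sum.inl a) : V ⊕ V ⊕ Unit)

@[simp]
lemma mycielskian_adj_inl_inl {a b : V} : (μ).Adj (.inl a) (.inl b) ↔ G.Adj a b := by
  simp only [mycielskian, fromRel_adj, ne_eq, Sum.inl.injEq, G.adj_comm b a, or_self]
  exact ⟨And.right, fun h => ⟨h.ne, h⟩⟩

@[simp]
lemma mycielskian_adj_inl_shadow {a b : V} : (μ).Adj (.inl a) (shadow b) ↔ G.Adj a b := by
  simp [mycielskian]

@[simp]
lemma mycielskian_adj_shadow_apex (a : V) : (μ).Adj (shadow a) apex := by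
  simp [mycielskian]

@[simp]
lemma mycielskian_not_adj_inl_apex (a : V) : ¬ (μ).Adj (.inl a) apex := by
  simp [mycielskian]

@[simp]
lemma mycielskian_not_adj_shadow_shadow (a b : V) : ¬ (μ).Adj (shadow a) (shadow b) := by
  simp [mycielskian]

variable (G) in
def mycielskianInl : G →g μ where
  toFun := Sum.inl
  map_rel' := mycielskian_adj_inl_inl.2

def mycielskianFold (d : V) : V ⊕ V ⊕ Unit → V :=
  Sum.elim id (Sum.elim id fun _ => d)

@[simp]
lemma mycielskianFold_inl (d a : V) : mycielskianFold d (.inl a) = a :=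
  rfl

@[simp]
lemma mycielskianFold_shadow (d a : V) : mycielskianFold d (shadow a) = a :=
  rfl

lemma SimpleGraph.Adj.mycielskianFold (d : V) {x y : V ⊕ V ⊕ Unit} (h : (μ).Adj x y)
    (hx : x ≠ apex) (hy : y ≠ apex) : G.Adj (mycielskianFold d x) (mycielskianFold d y) := by
  rcases x with a | a | ⟨⟩ <;> rcases y with b | b | ⟨⟩
  all_goals first
    | exact absurd rfl hx
    | exact absurd rfl hy
    | simp_all [mycielskian, G.adj_comm]

lemma exists_walk_mycielskian_fold (d : V) {x y : V ⊕ V ⊕ Unit} (p : (μ).Walk x y)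
    (hp : apex ∉ p.support) :
    ∃ q : G.Walk (mycielskianFold d x) (mycielskianFold d y), q.length = p.length := by
  induction p with
  | nil => exact ⟨.nil, rfl⟩
  | @cons x y z h p ih =>
    rw [Walk.support_cons, List.mem_cons, not_or] at hp
    obtain ⟨q, hq⟩ := ih hp.2
    have hy : y ≠ apex := fun hy => hp.2 (hy ▸ p.start_mem_support)
    exact ⟨.cons (h.mycielskianFold d (Ne.symm hp.1) hy) q, by simp [hq]⟩

lemma exists_walk_mycielskian_inl_shadow {a b : V} (p : G.Walk a b) (hp : ¬ p.Nil) :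
    ∃ q : (μ).Walk (.inl a) (shadow b), q.length = p.length := by
  induction p with
  | nil => exact absurd Walk.Nil.nil hp
  | @cons a c b h p ih =>
    by_cases hnil : p.Nil
    · cases hnil.eq
      exact ⟨.cons (mycielskian_adj_inl_shadow.2 h) .nil, by simp [hnil.length_eq_zero]⟩
    · obtain ⟨q, hq⟩ := ih hnil
      exact ⟨.cons (mycielskian_adj_inl_inl.2 h) q, by simp [hq]⟩

lemma dist_mycielskian_shadow_apex (a : V) : (μ).dist (shadow a) apex = 1 :=
  dist_eq_one_iff_adj.2 (mycielskian_adj_shadow_apex a)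

lemma dist_mycielskian_inl_apex {a b : V} (hab : G.Adj a b) : (μ).dist (.inl a) apex = 2 :=
  dist_eq_two_of_adj_of_adj (mycielskian_adj_inl_shadow.2 hab) (mycielskian_adj_shadow_apex b)
    (mycielskian_not_adj_inl_apex a) (by simp)

lemma dist_mycielskian_inl_shadow_self {a b : V} (hab : G.Adj a b) :
    (μ).dist (.inl a) (shadow a) = 2 :=
  dist_eq_two_of_adj_of_adj (mycielskian_adj_inl_inl.2 hab)
    (mycielskian_adj_inl_shadow.2 hab.symm) (by simp) (by simp)

lemma dist_mycielskian_shadow_shadow [DecidableEq V] (a b : V) :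
    (μ).dist (shadow a) (shadow b) = if a = b then 0 else 2 := by
  split_ifs with hab
  · rw [hab, dist_self]
  · exact dist_eq_two_of_adj_of_adj (mycielskian_adj_shadow_apex a)
      (mycielskian_adj_shadow_apex b).symm (mycielskian_not_adj_shadow_shadow a b) (by simpa)

lemma min_dist_le_dist_mycielskian (d : V) {x y : V ⊕ V ⊕ Unit} (hxy : (μ).Reachable x y) :
    min (G.dist (mycielskianFold d x) (mycielskianFold d y)) ((μ).dist x apex + (μ).dist apex y)
      ≤ (μ).dist x y := by
  classical
  obtain ⟨p, hp⟩ := hxy.exists_walk_length_eq_dist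
  by_cases happ : apex ∈ p.support
  · exact (min_le_right _ _).trans (hp ▸ p.dist_add_dist_le_length happ)
  · obtain ⟨q, hq⟩ := exists_walk_mycielskian_fold d p happ
    exact (min_le_left _ _).trans (hp ▸ hq ▸ dist_le q)

lemma dist_mycielskian_eq_min (d : V) {x y : V ⊕ V ⊕ Unit} (hx : (μ).Reachable x apex)
    (hy : (μ).Reachable apex y)
    (hle : (μ).dist x y ≤ G.dist (mycielskianFold d x) (mycielskianFold d y)) :
    (μ).dist x y = min (G.dist (mycielskianFold d x) (mycielskianFold d y))
      ((μ).dist x apex + (μ).dist apex y) :=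
  le_antisymm (le_min hle (hx.dist_triangle_left y)) (min_dist_le_dist_mycielskian d (hx.trans hy))

lemma dist_mycielskian_inl_inl [Nontrivial V] (hc : G.Connected) (a b : V) :
    (μ).dist (.inl a) (.inl b) = min (G.dist a b) 4 := by
  obtain ⟨a', ha⟩ := hc.preconnected.exists_adj_of_nontrivial a
  obtain ⟨b', hb⟩ := hc.preconnected.exists_adj_of_nontrivial b
  have hle : (μ).dist (.inl a) (.inl b) ≤ G.dist a b := by
    obtain ⟨p, hp⟩ := hc.exists_walk_length_eq_dist a b
    have := dist_le (p.map (mycielskianInl G))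
    rwa [Walk.length_map, hp] at this
  have hxa := dist_mycielskian_inl_apex ha
  have hay := dist_comm.trans (dist_mycielskian_inl_apex hb)
  rw [dist_mycielskian_eq_min a (Reachable.of_dist_ne_zero (by omega))
    (Reachable.of_dist_ne_zero (by omega)) hle, hxa, hay]
  rfl

lemma dist_mycielskian_inl_shadow [Nontrivial V] [DecidableEq V] (hc : G.Connected) (a b : V) :
    (μ).dist (.inl a) (shadow b) = if a = b then 2 else min (G.dist a b) 3 := by
  obtain ⟨a', ha⟩ := hc.preconnected.exists_adj_of_nontrivial a
  split_ifs with hab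
  · exact hab ▸ dist_mycielskian_inl_shadow_self ha
  have hle : (μ).dist (.inl a) (shadow b) ≤ G.dist a b := by
    obtain ⟨p, hp⟩ := hc.exists_walk_length_eq_dist a b
    obtain ⟨q, hq⟩ := exists_walk_mycielskian_inl_shadow p (Walk.not_nil_of_ne hab)
    exact hp ▸ hq ▸ dist_le q
  have hxa := dist_mycielskian_inl_apex ha
  have hay := dist_comm.trans (dist_mycielskian_shadow_apex (G := G) b)
  rw [dist_mycielskian_eq_min a (Reachable.of_dist_ne_zero (by omega))
    (Reachable.of_dist_ne_zero (by omega)) hle, hxa, hay]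
  rfl

variable [Fintype V]

lemma sum_dist_mycielskian_inl_inl [Nontrivial V] (hc : G.Connected) :
    ∑ a : V, ∑ b : V, ((μ).dist (.inl a) (.inl b) : ℚ) = 4 * Fintype.card V ^ 2
      - 4 * Fintype.card V - 6 * distCount G 1 - 4 * distCount G 2 - 2 * distCount G 3 := by
  simp only [dist_mycielskian_inl_inl hc, cast_min_four, Finset.sum_sub_distrib,
    Finset.sum_const, Finset.card_univ, nsmul_eq_mul, sum_sum_ite_dist_zero G hc,
    sum_sum_ite_dist_eq G (k := 1) one_ne_zero, sum_sum_ite_dist_eq G (k := 2) two_ne_zero,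
    sum_sum_ite_dist_eq G (k := 3) three_ne_zero]
  ring

lemma sum_dist_mycielskian_inl_shadow [Nontrivial V] (hc : G.Connected) :
    ∑ a : V, ∑ b : V, ((μ).dist (.inl a) (shadow b) : ℚ) = 3 * Fintype.card V ^ 2
      - Fintype.card V - 4 * distCount G 1 - 2 * distCount G 2 := by
  classical
  simp only [dist_mycielskian_inl_shadow hc, ← hc.dist_eq_zero_iff, cast_ite_min_three,
    Finset.sum_sub_distrib, Finset.sum_const, Finset.card_univ, nsmul_eq_mul,
    sum_sum_ite_dist_zero G hc, sum_sum_ite_dist_eq G (k := 1) one_ne_zero,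
    sum_sum_ite_dist_eq G (k := 2) two_ne_zero]
  ring

lemma sum_dist_mycielskian_shadow_shadow (hc : G.Connected) :
    ∑ a : V, ∑ b : V, ((μ).dist (shadow a) (shadow b) : ℚ) =
      2 * Fintype.card V ^ 2 - 2 * Fintype.card V := by
  classical
  have h (a b : V) :
      ((μ).dist (shadow a) (shadow b) : ℚ) = 2 - if G.dist a b = 0 then 2 else 0 := by
    simp only [dist_mycielskian_shadow_shadow, ← hc.dist_eq_zero_iff]
    split_ifs <;> norm_num
  simp only [h, Finset.sum_sub_distrib, Finset.sum_const, Finset.card_univ, nsmul_eq_mul,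
    sum_sum_ite_dist_zero G hc]
  ring

lemma sum_dist_mycielskian_inl_apex [Nontrivial V] (hc : G.Connected) :
    ∑ a : V, ((μ).dist (.inl a) apex : ℚ) = 2 * Fintype.card V := by
  have h (a : V) : (μ).dist (.inl a) apex = 2 :=
    dist_mycielskian_inl_apex (hc.preconnected.exists_adj_of_nontrivial a).choose_spec
  simp [h, mul_comm]

lemma sum_dist_mycielskian_shadow_apex :
    ∑ a : V, ((μ).dist (shadow a) apex : ℚ) = Fintype.card V := by
  simp [dist_mycielskian_shadow_apex]

end Mycielskian

/-- For a connected graph `G` with `n ≥ 2` vertices and `m` edges, with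
`a_k = d(G,k)`, the Wiener index of `μ(G)` is `6n² - n - 7m - 4a₂ - a₃`. -/
theorem stmt_8 {V : Type*} [Fintype V] (G : SimpleGraph V) (n m : ℕ)
    (hn : Fintype.card V = n) (hn2 : 2 ≤ n) (hm : Nat.card G.edgeSet = m)
    (hc : G.Connected) :
    wiener (mycielskian G) =
      6 * (n : ℚ) ^ 2 - n - 7 * m - 4 * distCount G 2 - distCount G 3 := by
  classical
  subst hn hm
  have : Nontrivial V := Fintype.one_lt_card_iff_nontrivial.mp hn2
  have hflip : ∑ a : V, ∑ b : V, ((mycielskian G).dist (.inr (.inl a)) (.inl b) : ℚ) =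
      ∑ a : V, ∑ b : V, ((mycielskian G).dist (.inl a) (.inr (.inl b)) : ℚ) := by
    rw [Finset.sum_comm]
    simp only [dist_comm]
  rw [wiener]
  simp only [Fintype.sum_sum_type, Finset.univ_unique, Finset.sum_singleton,
    PUnit.default_eq_unit, Finset.sum_add_distrib, dist_self, hflip,
    dist_comm (G := mycielskian G) (u := Sum.inr (Sum.inr ()))]
  rw [sum_dist_mycielskian_inl_inl hc, sum_dist_mycielskian_inl_shadow hc,
    sum_dist_mycielskian_shadow_shadow hc, sum_dist_mycielskian_inl_apex hc,
    sum_dist_mycielskian_shadow_apex, distCount_one]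
  push_cast
  ring
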